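/- Derivative of the attitude error function: let R, R_d : ℝ → M_3(ℝ) be differentiable with R(t), R_d(t) ∈ SO(3) for all t, and let ω, ω_d : ℝ → ℝ^3 satisfy R'(t) = R(t) [ω(t)]_× and R_d'(t) = R_d(t) [ω_d(t)]_×. Then for every t, the function s ↦ Ψ(R(s), R_d(s)) is differentiable at t with derivative ⟨e_R(t), e_ω(t)⟩, where e_R(t) = (1/2) (R_d(t)ᵀ R(t) − R(t)ᵀ R_d(t))∨ and e_ω(t) = ω(t) − R(t)ᵀ R_d(t) ω_d(t). -/

import Mathlib

open Real Matrix

attribute [local instance] Matrix.normedAddCommGroup Matrix.normedSpace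

/-- `SO(3)`: real 3×3 matrices `Q` with `Qᵀ Q = I` and `det Q = 1`. -/
def SO3 (Q : Matrix (Fin 3) (Fin 3) ℝ) : Prop :=
  Qᵀ * Q = 1 ∧ Q.det = 1

/-- The hat map `[x]_×`: the skew-symmetric matrix with `[x]_× y = x × y`. -/
noncomputable def hat (x : EuclideanSpace ℝ (Fin 3)) : Matrix (Fin 3) (Fin 3) ℝ :=
  !![0, -x 2, x 1; x 2, 0, -x 0; -x 1, x 0, 0]

/-- The attitude error function `Ψ(R, R_d) = (1/2) tr(I − R_dᵀ R)`. -/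
noncomputable def Psi (R Rd : Matrix (Fin 3) (Fin 3) ℝ) : ℝ :=
  (1 / 2 : ℝ) * (1 - Rdᵀ * R).trace

/-- The attitude error vector `e_R = (1/2) (R_dᵀ R − Rᵀ R_d)∨`, where `∨` is the
vee map from skew-symmetric matrices to `ℝ³`. -/
noncomputable def errVec (R Rd : Matrix (Fin 3) (Fin 3) ℝ) : EuclideanSpace ℝ (Fin 3) :=
  (1 / 2 : ℝ) • (WithLp.toLp 2 ![(Rdᵀ * R - Rᵀ * Rd) 2 1, (Rdᵀ * R - Rᵀ * Rd) 0 2,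
    (Rdᵀ * R - Rᵀ * Rd) 1 0] : EuclideanSpace ℝ (Fin 3))

/-- The angular velocity error `e_ω = ω − Rᵀ R_d ω_d`. -/
noncomputable def errOmega (R Rd : Matrix (Fin 3) (Fin 3) ℝ)
    (ω ωd : EuclideanSpace ℝ (Fin 3)) : EuclideanSpace ℝ (Fin 3) :=
  ω - (show EuclideanSpace ℝ (Fin 3) from WithLp.toLp 2 ((Rᵀ * Rd).mulVec ωd))

lemma euc_smul_apply (c : ℝ) (x : EuclideanSpace ℝ (Fin 3)) (i : Fin 3) :
    (c • x) i = c * x i := rfl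

lemma hasDerivAt_entry {f : ℝ → Matrix (Fin 3) (Fin 3) ℝ} {f' : Matrix (Fin 3) (Fin 3) ℝ}
    {t : ℝ} (hf : HasDerivAt f f' t) (i j : Fin 3) :
    HasDerivAt (fun s => f s i j) (f' i j) t := by
  have h1 : HasDerivAt (fun s => f s i) (f' i) t :=
    ((ContinuousLinearMap.proj (R := ℝ) (φ := fun _ : Fin 3 => Fin 3 → ℝ) i).hasFDerivAt.comp_hasDerivAt t hf)
  exact ((ContinuousLinearMap.proj (R := ℝ) (φ := fun _ : Fin 3 => ℝ) j).hasFDerivAt.comp_hasDerivAt t h1)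

set_option maxHeartbeats 1600000 in
/-- **Derivative of the attitude error function**: if `R' = R[ω]_×` and
`R_d' = R_d[ω_d]_×` with values in `SO(3)`, then `s ↦ Ψ(R(s), R_d(s))` is
differentiable at every `t` with derivative `⟨e_R(t), e_ω(t)⟩`. -/
theorem psi_hasDerivAt (R Rd : ℝ → Matrix (Fin 3) (Fin 3) ℝ)
    (ω ωd : ℝ → EuclideanSpace ℝ (Fin 3))
    (hRso : ∀ t, SO3 (R t)) (hRdso : ∀ t, SO3 (Rd t))
    (hR : ∀ t, HasDerivAt R (R t * hat (ω t)) t)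
    (hRd : ∀ t, HasDerivAt Rd (Rd t * hat (ωd t)) t) (t : ℝ) :
    HasDerivAt (fun s => Psi (R s) (Rd s))
      (inner ℝ (errVec (R t) (Rd t)) (errOmega (R t) (Rd t) (ω t) (ωd t)) : ℝ) t := by
  have hg : HasDerivAt (fun s => ∑ i, ∑ j, Rd s i j * R s i j)
      (∑ i, ∑ j, ((Rd t * hat (ωd t)) i j * R t i j + Rd t i j * (R t * hat (ω t)) i j)) t := by
    refine HasDerivAt.fun_sum fun i _ => HasDerivAt.fun_sum fun j _ => ?_
    exact (hasDerivAt_entry (hRd t) i j).mul (hasDerivAt_entry (hR t) i j)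
  have hfun : (fun s => Psi (R s) (Rd s))
      = fun s => (1/2 : ℝ) * ((3:ℝ) - ∑ i, ∑ j, Rd s i j * R s i j) := by
    funext s
    simp only [Psi, Matrix.trace, Matrix.diag, Matrix.sub_apply, Matrix.one_apply,
      Matrix.mul_apply, Matrix.transpose_apply, Fin.sum_univ_three]
    norm_num; ring
  rw [hfun]
  have hmain := (hg.const_sub (3:ℝ)).const_mul (1/2 : ℝ)
  convert hmain using 1
  any_goals rfl
  -- now the scalar identity
  set A := Rd t with hAdef
  set B := R t with hBdef
  obtain ⟨hA1, hAdet⟩ := hRdso t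
  obtain ⟨hB1, hBdet⟩ := hRso t
  have hAA : A * Aᵀ = 1 := mul_eq_one_comm.mp hA1
  set M := Aᵀ * B with hMdef
  have hMt : Mᵀ * M = 1 := by
    have : Mᵀ * M = Bᵀ * (A * Aᵀ) * B := by
      simp [hMdef, Matrix.transpose_mul, Matrix.mul_assoc]
    rw [this, hAA, Matrix.mul_one, hB1]
  have hdet : M.det = 1 := by
    simp [hMdef, Matrix.det_mul, Matrix.det_transpose, hAdet, hBdet]
    rw [hAdef, hBdef, hAdet, hBdet, mul_one]
  have hadj : M.adjugate = Mᵀ := by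
    have h1 : M * M.adjugate = 1 := by rw [Matrix.mul_adjugate, hdet, one_smul]
    calc M.adjugate = (Mᵀ * M) * M.adjugate := by rw [hMt, Matrix.one_mul]
      _ = Mᵀ * (M * M.adjugate) := by rw [Matrix.mul_assoc]
      _ = Mᵀ := by rw [h1, Matrix.mul_one]
  rw [Matrix.adjugate_fin_three] at hadj
  have H12 := congrFun (congrFun hadj 1) 2
  have H21 := congrFun (congrFun hadj 2) 1
  have H20 := congrFun (congrFun hadj 2) 0
  have H02 := congrFun (congrFun hadj 0) 2
  have H01 := congrFun (congrFun hadj 0) 1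
  have H10 := congrFun (congrFun hadj 1) 0
  simp only [hMdef, Matrix.mul_apply, Matrix.transpose_apply, Fin.sum_univ_three,
    Matrix.of_apply, Fin.isValue, Matrix.cons_val', Matrix.cons_val_zero, Matrix.cons_val_one, Matrix.head_cons,
    Matrix.empty_val', Matrix.cons_val_fin_one, Matrix.head_fin_const,
    Matrix.cons_val_two, Matrix.tail_cons] at H12 H21 H20 H02 H01 H10
  simp only [errVec, errOmega, hat, inner, PiLp.inner_apply, RCLike.inner_apply,
    conj_trivial, euc_smul_apply, PiLp.smul_apply, PiLp.sub_apply, Pi.smul_apply, Pi.sub_apply, smul_eq_mul,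
    Matrix.mulVec, dotProduct, Matrix.mul_apply, Matrix.sub_apply,
    Matrix.transpose_apply, Fin.sum_univ_three, Matrix.of_apply, Fin.isValue,
    Matrix.cons_val', Matrix.cons_val_zero, Matrix.cons_val_one, Matrix.head_cons,
    Matrix.empty_val', Matrix.cons_val_fin_one, Matrix.head_fin_const,
    Matrix.cons_val_two, Matrix.tail_cons, PiLp.toLp_apply, WithLp.ofLp_toLp, RCLike.re_to_real, star_trivial]
  linear_combination (-(ωd t 0)/2) * (H12 - H21) + (-(ωd t 1)/2) * (H20 - H02)
    + (-(ωd t 2)/2) * (H01 - H10)
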